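/- arXiv:2205.01744 — 7 statements merged into one kernel-verified Lean document; each statement's English description precedes it below -/
import Mathlib

section
/- Assume a = 0, b > 0 and c > (b·q₁)^(α₁/α₂)·b·q₂, where q₁ = sin(α₁π/2)/sin((α₁+α₂)π/2), q₂ = sin(α₂π/2)/sin((α₁+α₂)π/2). Then the unique positive root ω₀ of the equation h₂(ω) = 0 is ω₀ = (b·q₁)^(1/α₂), and at this root h₁(ω₀) = c - (b·q₁)^(α₁/α₂)·b·q₂ > 0. -/
/-!
Factoring `ω ^ α₁` out of `h₂` leaves `ω ^ α₂ · sin((α₁+α₂)π/2) = b · sin(α₁π/2)`, whose only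
positive root is `ω₀ = (b q₁) ^ (1/α₂)`. At `ω₀` we have `ω₀ ^ (α₁+α₂) = (b q₁) ^ (α₁/α₂) · b q₁`,
and the subtraction formula `sin x cos (x+y) - cos x sin (x+y) = -sin y` turns `h₁(ω₀)` into
`c - (b q₁) ^ (α₁/α₂) · b q₂`.
-/

open Real

lemma sin_mul_pi_div_two_pos {x : ℝ} (h0 : 0 < x) (h2 : x < 2) : 0 < sin (x * π / 2) :=
  sin_pos_of_pos_of_lt_pi (by positivity) (by nlinarith [pi_pos])

lemma sin_div_sin_add_mul_cos_add_sub_cos {x y : ℝ} (h : sin (x + y) ≠ 0) :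
    sin x / sin (x + y) * cos (x + y) - cos x = -(sin y / sin (x + y)) := by
  have hsub : sin x * cos (x + y) - cos x * sin (x + y) = -sin y := by
    rw [← sin_sub, sub_add_cancel_left, sin_neg]
  field_simp
  linear_combination hsub

lemma rpow_add_mul_sub_mul_rpow_mul_eq_zero_iff {ω p r b s t : ℝ} (hω : 0 < ω) (hr : r ≠ 0)
    (hs : s ≠ 0) (hbts : 0 ≤ b * (t / s)) :
    ω ^ (p + r) * s - b * ω ^ p * t = 0 ↔ ω = (b * (t / s)) ^ (1 / r) := by
  have hfactor : ω ^ (p + r) * s - b * ω ^ p * t = ω ^ p * s * (ω ^ r - b * (t / s)) := by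
    rw [rpow_add hω]
    field_simp
  rw [hfactor, mul_eq_zero, mul_eq_zero, sub_eq_zero, one_div,
    ← rpow_inv_eq hω.le hbts (inv_ne_zero hr), inv_inv]
  simp [(rpow_pos_of_pos hω p).ne', hs]

lemma rpow_one_div_rpow {y : ℝ} (hy : 0 ≤ y) (p r : ℝ) : (y ^ (1 / r)) ^ p = y ^ (p / r) := by
  rw [← rpow_mul hy, one_div_mul_eq_div]

lemma rpow_one_div_rpow_add {y : ℝ} (hy : 0 < y) {r : ℝ} (hr : r ≠ 0) (p : ℝ) :
    (y ^ (1 / r)) ^ (p + r) = y ^ (p / r) * y := by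
  rw [rpow_one_div_rpow hy.le, add_div, div_self hr, rpow_add hy, rpow_one]

theorem stmt_8 (α₁ α₂ b c q₁ q₂ : ℝ) (hα₁ : 0 < α₁) (hα₁₂ : α₁ < α₂) (hα₂ : α₂ ≤ 1)
    (hq₁ : q₁ = Real.sin (α₁ * Real.pi / 2) / Real.sin ((α₁ + α₂) * Real.pi / 2))
    (hq₂ : q₂ = Real.sin (α₂ * Real.pi / 2) / Real.sin ((α₁ + α₂) * Real.pi / 2))
    (hb : 0 < b) (hc : c > (b * q₁) ^ (α₁ / α₂) * b * q₂) :
    (∀ ω : ℝ, 0 < ω →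
        (ω ^ (α₁ + α₂) * Real.sin ((α₁ + α₂) * Real.pi / 2)
            - b * ω ^ α₁ * Real.sin (α₁ * Real.pi / 2) = 0
          ↔ ω = (b * q₁) ^ (1 / α₂))) ∧
    ((b * q₁) ^ (1 / α₂)) ^ (α₁ + α₂) * Real.cos ((α₁ + α₂) * Real.pi / 2)
        - b * ((b * q₁) ^ (1 / α₂)) ^ α₁ * Real.cos (α₁ * Real.pi / 2) + c
      = c - (b * q₁) ^ (α₁ / α₂) * b * q₂ ∧
    0 < c - (b * q₁) ^ (α₁ / α₂) * b * q₂ := by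
  have hα₂0 : 0 < α₂ := hα₁.trans hα₁₂
  have hsinS := sin_mul_pi_div_two_pos (add_pos hα₁ hα₂0) (by linarith)
  have hq₁pos : 0 < q₁ := hq₁ ▸ div_pos (sin_mul_pi_div_two_pos hα₁ (by linarith)) hsinS
  have hbq₁ : 0 < b * q₁ := mul_pos hb hq₁pos
  have hcos : q₁ * cos ((α₁ + α₂) * π / 2) - cos (α₁ * π / 2) = -q₂ := by
    have hsplit : (α₁ + α₂) * π / 2 = α₁ * π / 2 + α₂ * π / 2 := by ring
    rw [hq₁, hq₂, hsplit]
    exact sin_div_sin_add_mul_cos_add_sub_cos (hsplit ▸ hsinS.ne')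
  refine ⟨fun ω hω => ?_, ?_, by linarith⟩
  · subst hq₁
    exact rpow_add_mul_sub_mul_rpow_mul_eq_zero_iff hω hα₂0.ne' hsinS.ne' hbq₁.le
  · rw [rpow_one_div_rpow_add hbq₁ hα₂0.ne', rpow_one_div_rpow hbq₁.le]
    linear_combination (b * q₁) ^ (α₁ / α₂) * b * hcos
end

section
/- Assume b = 0, a > 0 and c > (a·q₂)^(α₂/α₁)·a·q₁, where q₁ = sin(α₁π/2)/sin((α₁+α₂)π/2), q₂ = sin(α₂π/2)/sin((α₁+α₂)π/2). Then the unique positive root ω₀ of h₂(ω) = 0 is ω₀ = (a·q₂)^(1/α₁), and h₁(ω₀) = c - (a·q₂)^(α₂/α₁)·a·q₁ > 0. -/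
/-!
Since `ω ^ (α₁ + α₂) = ω ^ α₁ * ω ^ α₂` and `ω ^ α₂ > 0`, the equation `h₂(ω) = 0` reduces to
`ω ^ α₁ = a q₂`, whose only positive solution is `(a q₂) ^ (1 / α₁)`. At that point
`h₁(ω₀) - c = a (a q₂) ^ (α₂ / α₁) (q₂ cos ((α₁ + α₂)π/2) - cos (α₂π/2))`, and the bracket is
`-q₁` by the subtraction formula `sin (α₂π/2 - (α₁ + α₂)π/2) = -sin (α₁π/2)`.
-/

open Real

lemma sin_mul_cos_add_sub_cos_mul_sin_add (x y : ℝ) :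
    sin (y * π / 2) * cos ((x + y) * π / 2) - cos (y * π / 2) * sin ((x + y) * π / 2)
      = -sin (x * π / 2) := by
  rw [← sin_sub, ← sin_neg]
  ring_nf

lemma rpow_add_mul_sub_mul_rpow_eq_zero_iff {ω β γ a s t : ℝ} (hω : 0 < ω) (hs : s ≠ 0) :
    ω ^ (β + γ) * s - a * ω ^ γ * t = 0 ↔ ω ^ β = a * t / s := by
  rw [rpow_add hω, eq_div_iff hs, ← sub_eq_zero (b := a * t),
    show ω ^ β * ω ^ γ * s - a * ω ^ γ * t = ω ^ γ * (ω ^ β * s - a * t) by ring,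
    mul_eq_zero, or_iff_right (rpow_pos_of_pos hω γ).ne']

lemma rpow_eq_iff_eq_rpow_one_div {ω β x : ℝ} (hω : 0 ≤ ω) (hx : 0 ≤ x) (hβ : β ≠ 0) :
    ω ^ β = x ↔ ω = x ^ (1 / β) := by
  rw [one_div, eq_comm (a := ω), rpow_inv_eq hx hω hβ, eq_comm]

lemma rpow_one_div_rpow_add_s9 {x β γ : ℝ} (hx : 0 < x) (hβ : β ≠ 0) :
    (x ^ (1 / β)) ^ (β + γ) = x * x ^ (γ / β) := by
  rw [← rpow_mul hx.le, show 1 / β * (β + γ) = 1 + γ / β by field_simp, rpow_add hx, rpow_one]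

lemma rpow_one_div_rpow_s9 {x β γ : ℝ} (hx : 0 ≤ x) : (x ^ (1 / β)) ^ γ = x ^ (γ / β) := by
  rw [← rpow_mul hx, one_div_mul_eq_div]

theorem stmt_9 (α₁ α₂ a c q₁ q₂ : ℝ) (hα₁ : 0 < α₁) (hα₁₂ : α₁ < α₂) (hα₂ : α₂ ≤ 1)
    (hq₁ : q₁ = Real.sin (α₁ * Real.pi / 2) / Real.sin ((α₁ + α₂) * Real.pi / 2))
    (hq₂ : q₂ = Real.sin (α₂ * Real.pi / 2) / Real.sin ((α₁ + α₂) * Real.pi / 2))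
    (ha : 0 < a) (hc : c > (a * q₂) ^ (α₂ / α₁) * a * q₁) :
    (∀ ω : ℝ, 0 < ω →
        (ω ^ (α₁ + α₂) * Real.sin ((α₁ + α₂) * Real.pi / 2)
            - a * ω ^ α₂ * Real.sin (α₂ * Real.pi / 2) = 0
          ↔ ω = (a * q₂) ^ (1 / α₁))) ∧
    ((a * q₂) ^ (1 / α₁)) ^ (α₁ + α₂) * Real.cos ((α₁ + α₂) * Real.pi / 2)
        - a * ((a * q₂) ^ (1 / α₁)) ^ α₂ * Real.cos (α₂ * Real.pi / 2) + c
      = c - (a * q₂) ^ (α₂ / α₁) * a * q₁ ∧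
    0 < c - (a * q₂) ^ (α₂ / α₁) * a * q₁ := by
  have hs : 0 < sin ((α₁ + α₂) * π / 2) := sin_mul_pi_div_two_pos (by linarith) (by linarith)
  have hs₂ : 0 < sin (α₂ * π / 2) := sin_mul_pi_div_two_pos (by linarith) (by linarith)
  have haq : 0 < a * q₂ := by rw [hq₂]; positivity
  refine ⟨fun ω hω => ?_, ?_, by linarith⟩
  · rw [rpow_add_mul_sub_mul_rpow_eq_zero_iff hω hs.ne', mul_div_assoc, ← hq₂]
    exact rpow_eq_iff_eq_rpow_one_div hω.le haq.le hα₁.ne'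
  · have hcos : q₂ * cos ((α₁ + α₂) * π / 2) - cos (α₂ * π / 2) = -q₁ := by
      rw [hq₁, hq₂, div_mul_eq_mul_div, div_sub' hs.ne', ← neg_div, div_left_inj' hs.ne']
      linear_combination sin_mul_cos_add_sub_cos_mul_sin_add α₁ α₂
    rw [rpow_one_div_rpow_add_s9 haq hα₁.ne', rpow_one_div_rpow_s9 haq.le]
    linear_combination (a * (a * q₂) ^ (α₂ / α₁)) * hcos
end

section
/- Let a, b > 0 and g₂(ω) = (α₁+α₂)·ω^(α₂)·sin((α₁+α₂)π/2) - a·α₂·ω^(α₂-α₁)·sin(α₂π/2) - b·α₁·sin(α₁π/2) for ω > 0. Then g₂ has exactly one zero ω₂ ∈ (0,∞); moreover g₂(ω) < 0 for 0 < ω < ω₂ and g₂(ω) > 0 for ω > ω₂. -/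
theorem stmt_10 (α₁ α₂ a b : ℝ) (hα₁ : 0 < α₁) (hα₁₂ : α₁ < α₂) (hα₂ : α₂ ≤ 1)
    (ha : 0 < a) (hb : 0 < b)
    (g₂ : ℝ → ℝ)
    (hg₂ : ∀ ω : ℝ, g₂ ω = (α₁ + α₂) * ω ^ α₂ * Real.sin ((α₁ + α₂) * Real.pi / 2)
        - a * α₂ * ω ^ (α₂ - α₁) * Real.sin (α₂ * Real.pi / 2)
        - b * α₁ * Real.sin (α₁ * Real.pi / 2)) :
    ∃ ω₂ : ℝ, 0 < ω₂ ∧ g₂ ω₂ = 0 ∧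
      (∀ ω : ℝ, 0 < ω → ω < ω₂ → g₂ ω < 0) ∧
      (∀ ω : ℝ, ω₂ < ω → 0 < g₂ ω) ∧
      (∀ ω : ℝ, 0 < ω → g₂ ω = 0 → ω = ω₂) := by
  have hπ := Real.pi_pos
  set s := Real.sin ((α₁ + α₂) * Real.pi / 2) with hs_def
  set s₂ := Real.sin (α₂ * Real.pi / 2) with hs₂_def
  set s₁ := Real.sin (α₁ * Real.pi / 2) with hs₁_def
  have hα₂0 : 0 < α₂ := hα₁.trans hα₁₂
  have hd : 0 < α₂ - α₁ := by linarith
  have hs : 0 < s := by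
    apply Real.sin_pos_of_pos_of_lt_pi
    · positivity
    · nlinarith
  have hs₂ : 0 < s₂ := by
    apply Real.sin_pos_of_pos_of_lt_pi
    · positivity
    · nlinarith
  have hs₁ : 0 < s₁ := by
    apply Real.sin_pos_of_pos_of_lt_pi
    · positivity
    · nlinarith
  set A := (α₁ + α₂) * s with hA_def
  set B := a * α₂ * s₂ with hB_def
  set c := b * α₁ * s₁ with hc_def
  have hA : 0 < A := by positivity
  have hB : 0 < B := by positivity
  have hc : 0 < c := by positivity
  have hg : ∀ ω : ℝ, g₂ ω = A * ω ^ α₂ - B * ω ^ (α₂ - α₁) - c := by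
    intro ω; rw [hg₂]; ring
  clear_value s s₁ s₂
  clear_value A B c
  -- key upward-crossing lemma
  have key : ∀ ω ω' : ℝ, 0 < ω → ω < ω' → 0 ≤ g₂ ω → 0 < g₂ ω' := by
    intro ω ω' hω hlt hge
    set t := ω' / ω with ht_def
    have ht : 1 < t := (one_lt_div hω).2 hlt
    have ht0 : 0 < t := lt_trans one_pos ht
    have hω' : ω' = ω * t := by
      rw [ht_def, mul_comm, div_mul_cancel₀ _ hω.ne']
    have h1 : ω' ^ α₂ = ω ^ α₂ * t ^ α₂ := by
      rw [hω', Real.mul_rpow hω.le ht0.le]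
    have h2 : ω' ^ (α₂ - α₁) = ω ^ (α₂ - α₁) * t ^ (α₂ - α₁) := by
      rw [hω', Real.mul_rpow hω.le ht0.le]
    have hge' : B * ω ^ (α₂ - α₁) + c ≤ A * ω ^ α₂ := by
      rw [hg] at hge; linarith
    have htα : t ^ (α₂ - α₁) < t ^ α₂ :=
      (Real.rpow_lt_rpow_left_iff ht).2 (by linarith)
    have ht1 : (1:ℝ) < t ^ α₂ := by
      have := (Real.rpow_lt_rpow_left_iff ht).2 hα₂0
      simpa [Real.rpow_zero] using this
    have hωd : 0 < ω ^ (α₂ - α₁) := Real.rpow_pos_of_pos hω _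
    have htα2 : 0 < t ^ α₂ := Real.rpow_pos_of_pos ht0 _
    rw [hg, h1, h2]
    nlinarith [mul_le_mul_of_nonneg_right hge' htα2.le,
      mul_pos (mul_pos hB hωd) (sub_pos.2 htα)]
  -- a point where g₂ is positive
  set M := max ((B + c + 1) / A) 1 with hM_def
  have hM1 : (1:ℝ) ≤ M := le_max_right _ _
  have hM0 : (0:ℝ) < M := lt_of_lt_of_le one_pos hM1
  set hi := M ^ (α₁⁻¹) with hhi_def
  have hhi1 : (1:ℝ) ≤ hi := Real.one_le_rpow hM1 (by positivity)
  have hhi0 : 0 < hi := lt_of_lt_of_le one_pos hhi1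
  have hpow : hi ^ α₁ = M := by
    rw [hhi_def, ← Real.rpow_mul hM0.le, inv_mul_cancel₀ hα₁.ne', Real.rpow_one]
  have hAM : B + c + 1 ≤ A * M := by
    calc B + c + 1 ≤ M * A := (div_le_iff₀ hA).1 (le_max_left _ _)
      _ = A * M := mul_comm _ _
  clear_value M hi
  have hhi_pos : 0 < g₂ hi := by
    have hsplit : hi ^ α₂ = hi ^ (α₂ - α₁) * hi ^ α₁ := by
      rw [← Real.rpow_add hhi0]; congr 1; ring
    have hd1 : (1:ℝ) ≤ hi ^ (α₂ - α₁) := Real.one_le_rpow hhi1 hd.le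
    rw [hg, hsplit, hpow]
    set D := hi ^ (α₂ - α₁) with hD
    clear_value D
    have hD0 : (0:ℝ) ≤ D := le_trans zero_le_one hd1
    have h1 : (B + c + 1) * D ≤ (A * M) * D := mul_le_mul_of_nonneg_right hAM hD0
    have h1' : B * D + c * D + D ≤ A * (D * M) := by
      linarith [h1, show (B + c + 1) * D = B * D + c * D + D from by ring,
        show (A * M) * D = A * (D * M) from by ring]
    have h2 : c * 1 ≤ c * D := mul_le_mul_of_nonneg_left hd1 hc.le
    linarith [h1', h2]
  -- a point where g₂ is negative
  set δ := min (min 1 ((c / (2 * A)) ^ (α₂⁻¹))) hi with hδ_def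
  have hδ0 : 0 < δ := by
    apply lt_min (lt_min one_pos _) hhi0
    exact Real.rpow_pos_of_pos (by positivity) _
  have hδhi : δ ≤ hi := min_le_right _ _
  have hle : δ ≤ (c / (2 * A)) ^ (α₂⁻¹) := le_trans (min_le_left _ _) (min_le_right _ _)
  clear_value δ
  have hδ_neg : g₂ δ < 0 := by
    have h1 : δ ^ α₂ ≤ ((c / (2 * A)) ^ (α₂⁻¹)) ^ α₂ :=
      Real.rpow_le_rpow hδ0.le hle hα₂0.le
    have h2 : ((c / (2 * A)) ^ (α₂⁻¹)) ^ α₂ = c / (2 * A) := by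
      rw [← Real.rpow_mul (by positivity), inv_mul_cancel₀ hα₂0.ne', Real.rpow_one]
    have h3 : A * δ ^ α₂ ≤ c / 2 := by
      rw [h2] at h1
      calc A * δ ^ α₂ ≤ A * (c / (2 * A)) := mul_le_mul_of_nonneg_left h1 hA.le
        _ = c / 2 := by field_simp
    have h4 : 0 < B * δ ^ (α₂ - α₁) := mul_pos hB (Real.rpow_pos_of_pos hδ0 _)
    rw [hg]; linarith
  -- continuity and IVT
  have cont : Continuous g₂ := by
    have hfe : g₂ = fun ω => A * ω ^ α₂ - B * ω ^ (α₂ - α₁) - c := funext hg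
    rw [hfe]
    have c1 : Continuous fun x : ℝ => x ^ α₂ :=
      continuous_iff_continuousAt.2 fun x => Real.continuousAt_rpow_const x α₂ (Or.inr hα₂0.le)
    have c2 : Continuous fun x : ℝ => x ^ (α₂ - α₁) :=
      continuous_iff_continuousAt.2 fun x => Real.continuousAt_rpow_const x _ (Or.inr hd.le)
    exact ((continuous_const.mul c1).sub (continuous_const.mul c2)).sub continuous_const
  have hsub := intermediate_value_Icc hδhi cont.continuousOn
  have h0mem : (0:ℝ) ∈ Set.Icc (g₂ δ) (g₂ hi) := ⟨hδ_neg.le, hhi_pos.le⟩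
  obtain ⟨ω₂, hω₂mem, hω₂val⟩ := hsub h0mem
  have hω₂0 : 0 < ω₂ := lt_of_lt_of_le hδ0 hω₂mem.1
  refine ⟨ω₂, hω₂0, hω₂val, ?_, ?_, ?_⟩
  · intro ω hω hlt
    by_contra h
    push_neg at h
    have := key ω ω₂ hω hlt h
    linarith [hω₂val ▸ this]
  · intro ω hlt
    exact key ω₂ ω hω₂0 hlt (le_of_eq hω₂val.symm)
  · intro ω hω hzero
    rcases lt_trichotomy ω ω₂ with h | h | h
    · exfalso
      have := key ω ω₂ hω h hzero.ge
      rw [hω₂val] at this; exact lt_irrefl 0 this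
    · exact h
    · exfalso
      have := key ω₂ ω hω₂0 h (le_of_eq hω₂val.symm)
      rw [hzero] at this; exact lt_irrefl 0 this
end

section
/- Let a, b > 0 and h₂(ω) = ω^(α₁+α₂)·sin((α₁+α₂)π/2) - a·ω^(α₂)·sin(α₂π/2) - b·ω^(α₁)·sin(α₁π/2). Then h₂ has exactly one zero ω₃ in (0,∞), with h₂(ω) < 0 on (0, ω₃) and h₂(ω) > 0 on (ω₃, ∞). -/
open Real

set_option maxHeartbeats 1000000 in
theorem stmt_11 (α₁ α₂ a b : ℝ) (hα₁ : 0 < α₁) (hα₁₂ : α₁ < α₂) (hα₂ : α₂ ≤ 1)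
    (ha : 0 < a) (hb : 0 < b)
    (h₂ : ℝ → ℝ)
    (hh₂ : ∀ ω : ℝ, h₂ ω = ω ^ (α₁ + α₂) * Real.sin ((α₁ + α₂) * Real.pi / 2)
        - a * ω ^ α₂ * Real.sin (α₂ * Real.pi / 2)
        - b * ω ^ α₁ * Real.sin (α₁ * Real.pi / 2)) :
    ∃ ω₃ : ℝ, 0 < ω₃ ∧ h₂ ω₃ = 0 ∧
      (∀ ω : ℝ, 0 < ω → ω < ω₃ → h₂ ω < 0) ∧
      (∀ ω : ℝ, ω₃ < ω → 0 < h₂ ω) ∧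
      (∀ ω : ℝ, 0 < ω → h₂ ω = 0 → ω = ω₃) := by
  have hα₂pos : 0 < α₂ := hα₁.trans hα₁₂
  have hpi := Real.pi_pos
  obtain ⟨s, hs_def⟩ : ∃ s, s = Real.sin ((α₁ + α₂) * Real.pi / 2) := ⟨_, rfl⟩
  obtain ⟨s₂, hs2_def⟩ : ∃ s₂, s₂ = Real.sin (α₂ * Real.pi / 2) := ⟨_, rfl⟩
  obtain ⟨s₁, hs1_def⟩ : ∃ s₁, s₁ = Real.sin (α₁ * Real.pi / 2) := ⟨_, rfl⟩
  have hs1 : 0 < s₁ := by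
    rw [hs1_def]
    apply Real.sin_pos_of_pos_of_lt_pi
    · positivity
    · nlinarith
  have hs2 : 0 < s₂ := by
    rw [hs2_def]
    apply Real.sin_pos_of_pos_of_lt_pi
    · positivity
    · nlinarith
  have hs : 0 < s := by
    rw [hs_def]
    apply Real.sin_pos_of_pos_of_lt_pi
    · have : 0 < α₁ + α₂ := by linarith
      positivity
    · nlinarith
  have hh₂' : ∀ ω : ℝ, h₂ ω = ω ^ (α₁ + α₂) * s - a * ω ^ α₂ * s₂ - b * ω ^ α₁ * s₁ := by
    intro ω; rw [hh₂, hs_def, hs2_def, hs1_def]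
  clear hh₂ hs_def hs1_def hs2_def
  set g : ℝ → ℝ := fun ω => ω ^ α₁ * s - a * s₂ - b * s₁ * ω ^ (α₁ - α₂) with hg_def
  have hfac : ∀ ω : ℝ, 0 < ω → h₂ ω = ω ^ α₂ * g ω := by
    intro ω hω
    rw [hh₂']
    simp only [hg_def]
    have h1 : ω ^ (α₁ + α₂) = ω ^ α₂ * ω ^ α₁ := by
      rw [← Real.rpow_add hω]; ring_nf
    have h2 : ω ^ α₁ = ω ^ α₂ * ω ^ (α₁ - α₂) := by
      rw [← Real.rpow_add hω]; ring_nf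
    rw [h1, h2]; ring
  have hmono : StrictMonoOn g (Set.Ioi (0:ℝ)) := by
    intro x hx y hy hxy
    simp only [Set.mem_Ioi] at hx hy
    have h1 : x ^ α₁ < y ^ α₁ := Real.rpow_lt_rpow hx.le hxy hα₁
    have h2 : y ^ (α₁ - α₂) < x ^ (α₁ - α₂) :=
      Real.rpow_lt_rpow_of_neg hx hxy (by linarith)
    simp only [hg_def]
    nlinarith [mul_lt_mul_of_pos_right h1 hs,
      mul_lt_mul_of_pos_left h2 (mul_pos hb hs1)]
  have hcont : ContinuousOn g (Set.Ioi (0:ℝ)) := by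
    apply ContinuousOn.sub
    apply ContinuousOn.sub
    · exact (ContinuousOn.rpow_const continuousOn_id
        (fun x hx => Or.inl (ne_of_gt hx))).mul continuousOn_const
    · exact continuousOn_const
    · exact continuousOn_const.mul (ContinuousOn.rpow_const continuousOn_id
        (fun x hx => Or.inl (ne_of_gt hx)))
  -- small point with g < 0
  obtain ⟨c, hc_def⟩ : ∃ c : ℝ, c = s / (b * s₁) + 1 := ⟨_, rfl⟩
  have hc1 : 1 < c := by
    rw [hc_def]
    have : 0 < s / (b * s₁) := by positivity
    linarith
  obtain ⟨x₁, hx1_def⟩ : ∃ x : ℝ, x = c ^ ((α₁ - α₂)⁻¹) := ⟨_, rfl⟩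
  have hx1pos : 0 < x₁ := by rw [hx1_def]; exact Real.rpow_pos_of_pos (by linarith) _
  have hx1le1 : x₁ ≤ 1 := by
    rw [hx1_def]
    apply Real.rpow_le_one_of_one_le_of_nonpos hc1.le
    rw [inv_nonpos]; linarith
  have hx1pow : x₁ ^ (α₁ - α₂) = c := by
    rw [hx1_def, ← Real.rpow_mul (by linarith : (0:ℝ) ≤ c),
      inv_mul_cancel₀ (by linarith : α₁ - α₂ ≠ 0), Real.rpow_one]
  have hgx1 : g x₁ < 0 := by
    have h1 : x₁ ^ α₁ ≤ 1 := Real.rpow_le_one hx1pos.le hx1le1 hα₁.le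
    simp only [hg_def]
    rw [hx1pow]
    have hbc : b * s₁ * c = s + b * s₁ := by
      rw [hc_def]; field_simp
    nlinarith
  -- big point with g > 0
  obtain ⟨B, hB_def⟩ : ∃ B : ℝ, B = (a * s₂ + b * s₁) / s + 1 := ⟨_, rfl⟩
  have hB1 : 1 < B := by
    rw [hB_def]
    have : 0 < (a * s₂ + b * s₁) / s := by positivity
    linarith
  obtain ⟨x₂, hx2_def⟩ : ∃ x : ℝ, x = B ^ (α₁⁻¹) := ⟨_, rfl⟩
  have hx2pos : 0 < x₂ := by rw [hx2_def]; exact Real.rpow_pos_of_pos (by linarith) _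
  have hx2ge1 : 1 ≤ x₂ := by
    rw [hx2_def]; exact Real.one_le_rpow hB1.le (by positivity)
  have hx2pow : x₂ ^ α₁ = B := by
    rw [hx2_def, ← Real.rpow_mul (by linarith : (0:ℝ) ≤ B),
      inv_mul_cancel₀ hα₁.ne', Real.rpow_one]
  have hgx2 : 0 < g x₂ := by
    have h1 : x₂ ^ (α₁ - α₂) ≤ 1 :=
      Real.rpow_le_one_of_one_le_of_nonpos hx2ge1 (by linarith)
    simp only [hg_def]
    rw [hx2pow]
    have hBs : B * s = a * s₂ + b * s₁ + s := by
      rw [hB_def]; field_simp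
    nlinarith [mul_le_mul_of_nonneg_left h1 (mul_pos hb hs1).le]
  have hx12 : x₁ < x₂ := by
    by_contra h
    push_neg at h
    have hle : g x₂ ≤ g x₁ :=
      (hmono.le_iff_le (Set.mem_Ioi.2 hx2pos) (Set.mem_Ioi.2 hx1pos)).2 h
    linarith
  have hsub : Set.Icc x₁ x₂ ⊆ Set.Ioi (0:ℝ) := fun x hx => lt_of_lt_of_le hx1pos hx.1
  obtain ⟨ω₃, hω₃mem, hω₃zero⟩ := intermediate_value_Icc hx12.le (hcont.mono hsub)
    (Set.mem_Icc.2 ⟨hgx1.le, hgx2.le⟩)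
  have hω₃pos : 0 < ω₃ := lt_of_lt_of_le hx1pos hω₃mem.1
  refine ⟨ω₃, hω₃pos, ?_, ?_, ?_, ?_⟩
  · rw [hfac ω₃ hω₃pos, hω₃zero, mul_zero]
  · intro ω hω hωlt
    rw [hfac ω hω]
    have hlt : g ω < g ω₃ := hmono (Set.mem_Ioi.2 hω) (Set.mem_Ioi.2 hω₃pos) hωlt
    rw [hω₃zero] at hlt
    have hp := Real.rpow_pos_of_pos hω α₂
    exact mul_neg_of_pos_of_neg hp hlt
  · intro ω hωgt
    have hω : 0 < ω := hω₃pos.trans hωgt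
    rw [hfac ω hω]
    have hlt : g ω₃ < g ω := hmono (Set.mem_Ioi.2 hω₃pos) (Set.mem_Ioi.2 hω) hωgt
    rw [hω₃zero] at hlt
    exact mul_pos (Real.rpow_pos_of_pos hω α₂) hlt
  · intro ω hω hzero
    rw [hfac ω hω] at hzero
    have hp := Real.rpow_pos_of_pos hω α₂
    have hgω : g ω = 0 := by
      rcases mul_eq_zero.1 hzero with h | h
      · exact absurd h hp.ne'
      · exact h
    by_contra hne
    rcases lt_or_gt_of_ne hne with h | h
    · have := hmono (Set.mem_Ioi.2 hω) (Set.mem_Ioi.2 hω₃pos) h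
      rw [hgω, hω₃zero] at this; exact lt_irrefl _ this
    · have := hmono (Set.mem_Ioi.2 hω₃pos) (Set.mem_Ioi.2 hω) h
      rw [hgω, hω₃zero] at this; exact lt_irrefl _ this
end

section
/- Let a, b > 0 with a·q₂ + b·q₁ > 1, where q₁ = sin(α₁π/2)/sin((α₁+α₂)π/2), q₂ = sin(α₂π/2)/sin((α₁+α₂)π/2). Then any ω₃ > 0 with h₂(ω₃) = 0 satisfies 1 < ω₃ < ((a+b)·q₂)^(1/α₁), where h₂(ω) = ω^(α₁+α₂)sin((α₁+α₂)π/2) - a·ω^(α₂)sin(α₂π/2) - b·ω^(α₁)sin(α₁π/2). -/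
set_option maxHeartbeats 1000000


theorem stmt_12 (α₁ α₂ a b q₁ q₂ : ℝ) (hα₁ : 0 < α₁) (hα₁₂ : α₁ < α₂) (hα₂ : α₂ ≤ 1)
    (hq₁ : q₁ = Real.sin (α₁ * Real.pi / 2) / Real.sin ((α₁ + α₂) * Real.pi / 2))
    (hq₂ : q₂ = Real.sin (α₂ * Real.pi / 2) / Real.sin ((α₁ + α₂) * Real.pi / 2))
    (ha : 0 < a) (hb : 0 < b) (h1 : 1 < a * q₂ + b * q₁) :
    ∀ ω₃ : ℝ, 0 < ω₃ →
      ω₃ ^ (α₁ + α₂) * Real.sin ((α₁ + α₂) * Real.pi / 2)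
        - a * ω₃ ^ α₂ * Real.sin (α₂ * Real.pi / 2)
        - b * ω₃ ^ α₁ * Real.sin (α₁ * Real.pi / 2) = 0 →
      1 < ω₃ ∧ ω₃ < ((a + b) * q₂) ^ (1 / α₁) := by
  intro ω hω heq
  have hπ := Real.pi_pos
  set s := Real.sin ((α₁ + α₂) * Real.pi / 2) with hsdef
  set s₁ := Real.sin (α₁ * Real.pi / 2) with hs1def
  set s₂ := Real.sin (α₂ * Real.pi / 2) with hs2def
  have hs0 : 0 < s := Real.sin_pos_of_pos_of_lt_pi (by nlinarith) (by nlinarith)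
  have hs10 : 0 < s₁ := Real.sin_pos_of_pos_of_lt_pi (by nlinarith) (by nlinarith)
  have hs20 : 0 < s₂ := Real.sin_pos_of_pos_of_lt_pi (by nlinarith) (by nlinarith)
  have hs12 : s₁ < s₂ := by
    apply Real.sin_lt_sin_of_lt_of_le_pi_div_two (by nlinarith) (by nlinarith) (by nlinarith)
  have hq1s : s₁ = q₁ * s := by rw [hq₁]; field_simp
  have hq2s : s₂ = q₂ * s := by rw [hq₂]; field_simp
  have hq20 : 0 < q₂ := by
    rw [hq₂]; exact div_pos hs20 hs0
  have hq10 : 0 < q₁ := by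
    rw [hq₁]; exact div_pos hs10 hs0
  have hp : 0 < ω ^ (α₁ + α₂) := Real.rpow_pos_of_pos hω _
  have hp1 : 0 < ω ^ α₁ := Real.rpow_pos_of_pos hω _
  have hp2 : 0 < ω ^ α₂ := Real.rpow_pos_of_pos hω _
  have hω1 : 1 < ω := by
    by_contra h
    push_neg at h
    have e1 : ω ^ (α₁ + α₂) ≤ ω ^ α₂ :=
      Real.rpow_le_rpow_of_exponent_ge hω h (by linarith)
    have e2 : ω ^ (α₁ + α₂) ≤ ω ^ α₁ :=
      Real.rpow_le_rpow_of_exponent_ge hω h (by linarith)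
    rw [hq1s, hq2s] at heq
    nlinarith [mul_le_mul_of_nonneg_left e1 (by positivity : (0:ℝ) ≤ a * q₂ * s),
      mul_le_mul_of_nonneg_left e2 (by positivity : (0:ℝ) ≤ b * q₁ * s),
      mul_pos hs0 hp]
  refine ⟨hω1, ?_⟩
  by_contra h
  push_neg at h
  have hM0 : 0 < (a + b) * q₂ := by positivity
  have hMle : (a + b) * q₂ ≤ ω ^ α₁ := by
    calc (a + b) * q₂ = (((a + b) * q₂) ^ (1 / α₁)) ^ α₁ := by
          rw [← Real.rpow_mul hM0.le, one_div_mul_cancel hα₁.ne', Real.rpow_one]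
      _ ≤ ω ^ α₁ := Real.rpow_le_rpow (Real.rpow_nonneg hM0.le _) h hα₁.le
  have hadd : ω ^ (α₁ + α₂) = ω ^ α₁ * ω ^ α₂ := Real.rpow_add hω _ _
  have e3 : ω ^ α₁ < ω ^ α₂ := Real.rpow_lt_rpow_of_exponent_lt hω1 hα₁₂
  have hq12 : q₁ < q₂ := by
    rw [hq1s, hq2s] at hs12
    exact lt_of_mul_lt_mul_right hs12 hs0.le
  have h2 : ω ^ α₁ * q₁ < ω ^ α₂ * q₂ := mul_lt_mul'' e3 hq12 hp1.le hq10.le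
  have h3 : (a + b) * q₂ * ω ^ α₂ ≤ ω ^ α₁ * ω ^ α₂ := mul_le_mul_of_nonneg_right hMle hp2.le
  rw [hq1s, hq2s, hadd] at heq
  nlinarith [mul_lt_mul_of_pos_right h2 (mul_pos hb hs0),
    mul_le_mul_of_nonneg_right h3 hs0.le]
end

section
/- Let ν ∈ (0,1) and C > 0, and suppose S : (0,∞) → ℝ is measurable with |S(t)| ≤ C·t^(ν-1) for 0 < t ≤ 1 and |S(t)| ≤ C·t^(-ν-1) for t ≥ 1. Then there exists a constant C₀ such that for all t ≥ 1, t^ν · ∫₀^t |S(t-s)|·s^(-ν) ds ≤ C₀. -/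
/-!
Split the integral at `s = t / 2`. On `(0, t/2)` the kernel is evaluated at `t - s ≥ t / 2`,
where its decay gives `|S (t - s)| ≲ t ^ (-ν - 1)`, against `∫₀^{t/2} s ^ (-ν) ≲ t ^ (1 - ν)`.
On `(t/2, t)` the weight is `s ^ (-ν) ≲ t ^ (-ν)`, and what remains is `∫₀^{t/2} |S|`, which is
bounded uniformly in `t` because `|S|` is integrable both at `0` (exponent `ν - 1 > -1`) and at
infinity (exponent `-ν - 1 < -1`).
-/

open MeasureTheory Set Real intervalIntegral

theorem IntervalIntegrable.of_abs_le_of_Ioo {f g : ℝ → ℝ} {a b : ℝ} (hab : a ≤ b)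
    (hg : IntervalIntegrable g volume a b) (hf : AEStronglyMeasurable f)
    (h : ∀ x ∈ Ioo a b, |f x| ≤ g x) : IntervalIntegrable f volume a b := by
  rw [intervalIntegrable_iff_integrableOn_Ioo_of_le hab] at hg ⊢
  exact hg.mono' hf.restrict (ae_restrict_of_forall_mem measurableSet_Ioo h)

theorem intervalIntegrable_of_abs_le_mul_rpow {f : ℝ → ℝ} {C a x : ℝ} (ha : -1 < a) (hx : 0 ≤ x)
    (hf : AEStronglyMeasurable f) (h : ∀ u, 0 < u → |f u| ≤ C * u ^ a) :
    IntervalIntegrable f volume 0 x :=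
  .of_abs_le_of_Ioo hx ((intervalIntegrable_rpow' ha).const_mul C) hf fun u hu => h u hu.1

theorem div_two_rpow_neg {t : ℝ} (ht : 0 ≤ t) (p : ℝ) : (t / 2) ^ (-p) = 2 ^ p * t ^ (-p) := by
  rw [div_rpow ht zero_le_two, rpow_neg zero_le_two, div_inv_eq_mul, mul_comm]

theorem le_mul_min_rpow {f : ℝ → ℝ} {C a b : ℝ} (hba : b ≤ a)
    (h₁ : ∀ u, 0 < u → u ≤ 1 → f u ≤ C * u ^ a) (h₂ : ∀ u, 1 ≤ u → f u ≤ C * u ^ b)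
    {u : ℝ} (hu : 0 < u) : f u ≤ C * min (u ^ a) (u ^ b) := by
  rcases le_total u 1 with hu₁ | hu₁
  · rw [min_eq_left (rpow_le_rpow_of_exponent_ge hu hu₁ hba)]
    exact h₁ u hu hu₁
  · rw [min_eq_right (rpow_le_rpow_of_exponent_le hu₁ hba)]
    exact h₂ u hu₁

theorem integral_le_of_le_mul_rpow_of_le_one {f : ℝ → ℝ} {C a x : ℝ} (hC : 0 ≤ C) (ha : -1 < a)
    (hx₀ : 0 ≤ x) (hx₁ : x ≤ 1) (hf : IntervalIntegrable f volume 0 x)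
    (h : ∀ u ∈ Ioo 0 x, f u ≤ C * u ^ a) : ∫ u in 0..x, f u ≤ C / (a + 1) := by
  have ha₁ : 0 < a + 1 := by linarith
  calc ∫ u in 0..x, f u
      ≤ ∫ u in 0..x, C * u ^ a :=
        integral_mono_on_of_le_Ioo hx₀ hf ((intervalIntegrable_rpow' ha).const_mul C) h
    _ = C * x ^ (a + 1) / (a + 1) := by
        rw [intervalIntegral.integral_const_mul, integral_rpow (.inl ha), zero_rpow ha₁.ne',
          sub_zero, mul_div_assoc]
    _ ≤ C * 1 / (a + 1) := by gcongr; exact rpow_le_one hx₀ hx₁ ha₁.le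
    _ = C / (a + 1) := by rw [mul_one]

theorem integral_le_of_le_mul_rpow_of_one_le {f : ℝ → ℝ} {C b x : ℝ} (hC : 0 ≤ C) (hb : b < -1)
    (hx : 1 ≤ x) (hf : IntervalIntegrable f volume 1 x)
    (h : ∀ u ∈ Ioo 1 x, f u ≤ C * u ^ b) : ∫ u in 1..x, f u ≤ C / (-b - 1) := by
  have h0 : (0 : ℝ) ∉ uIcc 1 x := by
    rw [uIcc_of_le hx]; exact fun h0 => by linarith [h0.1]
  have hb₁ : 0 < -b - 1 := by linarith
  calc ∫ u in 1..x, f u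
      ≤ ∫ u in 1..x, C * u ^ b :=
        integral_mono_on_of_le_Ioo hx hf ((intervalIntegrable_rpow (.inr h0)).const_mul C) h
    _ = C * (1 - x ^ (b + 1)) / (-b - 1) := by
        rw [intervalIntegral.integral_const_mul, integral_rpow (.inr ⟨by linarith, h0⟩),
          one_rpow, ← neg_div_neg_eq]
        ring
    _ ≤ C * 1 / (-b - 1) := by
        gcongr
        linarith [rpow_nonneg (zero_le_one.trans hx) (b + 1)]
    _ = C / (-b - 1) := by rw [mul_one]

theorem integral_le_of_power_law_bounds {f : ℝ → ℝ} {C a b x : ℝ} (hC : 0 ≤ C) (ha : -1 < a)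
    (hb : b < -1) (hx : 0 ≤ x) (hf : IntervalIntegrable f volume 0 x)
    (h₁ : ∀ u, 0 < u → u ≤ 1 → f u ≤ C * u ^ a) (h₂ : ∀ u, 1 ≤ u → f u ≤ C * u ^ b) :
    ∫ u in 0..x, f u ≤ C / (a + 1) + C / (-b - 1) := by
  have hb₀ : 0 ≤ C / (-b - 1) := div_nonneg hC (by linarith)
  rcases le_total x 1 with hx₁ | hx₁
  · have := integral_le_of_le_mul_rpow_of_le_one hC ha hx hx₁ hf
      fun u hu => h₁ u hu.1 (hu.2.le.trans hx₁)
    linarith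
  · have hf₀₁ : IntervalIntegrable f volume 0 1 :=
      hf.mono_set' (by rw [uIoc_of_le zero_le_one, uIoc_of_le hx]; exact Ioc_subset_Ioc_right hx₁)
    have hf₁ₓ : IntervalIntegrable f volume 1 x :=
      hf.mono_set' (by rw [uIoc_of_le hx₁, uIoc_of_le hx]; exact Ioc_subset_Ioc_left zero_le_one)
    rw [← integral_add_adjacent_intervals hf₀₁ hf₁ₓ]
    exact add_le_add
      (integral_le_of_le_mul_rpow_of_le_one hC ha zero_le_one le_rfl hf₀₁
        fun u hu => h₁ u hu.1 hu.2.le)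
      (integral_le_of_le_mul_rpow_of_one_le hC hb hx₁ hf₁ₓ fun u hu => h₂ u hu.1.le)

section WeightedConvolution

variable {ν C t : ℝ} {S : ℝ → ℝ}

theorem intervalIntegrable_and_rpow_mul_integral_le_lowerHalf (hν₀ : 0 ≤ ν) (hν₁ : ν < 1)
    (hC : 0 ≤ C) (ht : 1 ≤ t) (hS : Measurable S)
    (hS₂ : ∀ u, 0 < u → |S u| ≤ C * u ^ (-ν - 1)) :
    IntervalIntegrable (fun s => |S (t - s)| * s ^ (-ν)) volume 0 (t / 2) ∧
      t ^ ν * ∫ s in 0..t / 2, |S (t - s)| * s ^ (-ν) ≤ 2 ^ (2 * ν) * C / (1 - ν) := by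
  have ht₀ : 0 < t := by linarith
  have hpt : 0 < t / 2 := by positivity
  have hg : IntervalIntegrable (fun s => C * (t / 2) ^ (-ν - 1) * s ^ (-ν)) volume 0 (t / 2) :=
    (intervalIntegrable_rpow' (by linarith)).const_mul _
  have hle : ∀ s ∈ Ioo 0 (t / 2), |S (t - s)| * s ^ (-ν) ≤ C * (t / 2) ^ (-ν - 1) * s ^ (-ν) := by
    intro s hs
    have hts : t / 2 ≤ t - s := by linarith [hs.2]
    refine mul_le_mul_of_nonneg_right ?_ (rpow_nonneg hs.1.le _)
    calc |S (t - s)| ≤ C * (t - s) ^ (-ν - 1) := hS₂ _ (hpt.trans_le hts)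
      _ ≤ C * (t / 2) ^ (-ν - 1) :=
        mul_le_mul_of_nonneg_left (rpow_le_rpow_of_nonpos hpt hts (by linarith)) hC
  have hf : IntervalIntegrable (fun s => |S (t - s)| * s ^ (-ν)) volume 0 (t / 2) := by
    refine .of_abs_le_of_Ioo hpt.le hg (by fun_prop) fun s hs => ?_
    rw [abs_of_nonneg (by have := rpow_nonneg hs.1.le (-ν); positivity)]
    exact hle s hs
  have hpow : t ^ ν * ((t / 2) ^ (-ν - 1) * (t / 2) ^ (-ν + 1)) = 2 ^ (2 * ν) * t ^ (-ν) := by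
    rw [← rpow_add hpt, show -ν - 1 + (-ν + 1) = -(2 * ν) by ring, div_two_rpow_neg ht₀.le,
      mul_left_comm, ← rpow_add ht₀, show ν + -(2 * ν) = -ν by ring]
  refine ⟨hf, ?_⟩
  calc t ^ ν * ∫ s in 0..t / 2, |S (t - s)| * s ^ (-ν)
      ≤ t ^ ν * ∫ s in 0..t / 2, C * (t / 2) ^ (-ν - 1) * s ^ (-ν) := by
        gcongr
        exact integral_mono_on_of_le_Ioo hpt.le hf hg hle
    _ = C / (1 - ν) * (t ^ ν * ((t / 2) ^ (-ν - 1) * (t / 2) ^ (-ν + 1))) := by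
        rw [intervalIntegral.integral_const_mul, integral_rpow (.inl (by linarith)),
          zero_rpow (by linarith), show -ν + 1 = 1 - ν by ring]
        ring
    _ = 2 ^ (2 * ν) * C / (1 - ν) * t ^ (-ν) := by rw [hpow]; ring
    _ ≤ 2 ^ (2 * ν) * C / (1 - ν) :=
        mul_le_of_le_one_right (div_nonneg (by positivity) (by linarith))
          (rpow_le_one_of_one_le_of_nonpos ht (by linarith))

theorem intervalIntegrable_and_rpow_mul_integral_le_upperHalf (hν₀ : 0 ≤ ν) (ht : 0 < t)
    (hS : Measurable S) (hSi : IntervalIntegrable (fun u => |S u|) volume 0 (t / 2)) :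
    IntervalIntegrable (fun s => |S (t - s)| * s ^ (-ν)) volume (t / 2) t ∧
      t ^ ν * ∫ s in t / 2..t, |S (t - s)| * s ^ (-ν) ≤ 2 ^ ν * ∫ u in 0..t / 2, |S u| := by
  have hpt : 0 < t / 2 := by positivity
  have hg : IntervalIntegrable (fun s => 2 ^ ν * t ^ (-ν) * |S (t - s)|) volume (t / 2) t := by
    have := (hSi.comp_sub_left t).symm
    rw [sub_zero, show t - t / 2 = t / 2 by ring] at this
    exact this.const_mul _
  have hle : ∀ s ∈ Ioo (t / 2) t, |S (t - s)| * s ^ (-ν) ≤ 2 ^ ν * t ^ (-ν) * |S (t - s)| := by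
    intro s hs
    rw [mul_comm, ← div_two_rpow_neg ht.le]
    exact mul_le_mul_of_nonneg_right (rpow_le_rpow_of_nonpos hpt hs.1.le (by linarith))
      (abs_nonneg _)
  have hf : IntervalIntegrable (fun s => |S (t - s)| * s ^ (-ν)) volume (t / 2) t := by
    refine .of_abs_le_of_Ioo (by linarith) hg (by fun_prop) fun s hs => ?_
    rw [abs_of_nonneg (by have := rpow_nonneg (hpt.trans hs.1).le (-ν); positivity)]
    exact hle s hs
  refine ⟨hf, ?_⟩
  calc t ^ ν * ∫ s in t / 2..t, |S (t - s)| * s ^ (-ν)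
      ≤ t ^ ν * ∫ s in t / 2..t, 2 ^ ν * t ^ (-ν) * |S (t - s)| := by
        gcongr
        exact integral_mono_on_of_le_Ioo (by linarith) hf hg hle
    _ = 2 ^ ν * (t ^ ν * t ^ (-ν)) * ∫ u in 0..t / 2, |S u| := by
        rw [intervalIntegral.integral_const_mul, integral_comp_sub_left (fun u => |S u|) t,
          sub_self, show t - t / 2 = t / 2 by ring]
        ring
    _ = 2 ^ ν * ∫ u in 0..t / 2, |S u| := by
        rw [rpow_neg ht.le, mul_inv_cancel₀ (rpow_pos_of_pos ht ν).ne', mul_one]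

end WeightedConvolution

theorem stmt_18 (ν C : ℝ) (hν : ν ∈ Set.Ioo (0 : ℝ) 1) (hC : 0 < C)
    (S : ℝ → ℝ) (hS : Measurable S)
    (hS₁ : ∀ t : ℝ, 0 < t → t ≤ 1 → |S t| ≤ C * t ^ (ν - 1))
    (hS₂ : ∀ t : ℝ, 1 ≤ t → |S t| ≤ C * t ^ (-ν - 1)) :
    ∃ C₀ : ℝ, ∀ t : ℝ, 1 ≤ t →
      t ^ ν * ∫ s in (0 : ℝ)..t, |S (t - s)| * s ^ (-ν) ≤ C₀ := by
  obtain ⟨hν₀, hν₁⟩ := hν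
  have hSmin (u : ℝ) (hu : 0 < u) : |S u| ≤ C * min (u ^ (ν - 1)) (u ^ (-ν - 1)) :=
    le_mul_min_rpow (f := fun u => |S u|) (by linarith) hS₁ hS₂ hu
  have hSi (x : ℝ) (hx : 0 ≤ x) : IntervalIntegrable (fun u => |S u|) volume 0 x :=
    (intervalIntegrable_of_abs_le_mul_rpow (by linarith) hx hS.aestronglyMeasurable fun u hu =>
      (hSmin u hu).trans (mul_le_mul_of_nonneg_left (min_le_left _ _) hC.le)).abs
  have hmass (x : ℝ) (hx : 0 ≤ x) : ∫ u in 0..x, |S u| ≤ 2 * C / ν := by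
    have := integral_le_of_power_law_bounds hC.le (by linarith) (by linarith) hx (hSi x hx) hS₁ hS₂
    rwa [show ν - 1 + 1 = ν by ring, show -(-ν - 1) - 1 = ν by ring, ← add_div, ← two_mul] at this
  refine ⟨2 ^ (2 * ν) * C / (1 - ν) + 2 ^ ν * (2 * C / ν), fun t ht => ?_⟩
  obtain ⟨hi₁, hlower⟩ := intervalIntegrable_and_rpow_mul_integral_le_lowerHalf hν₀.le hν₁ hC.le ht
    hS fun u hu => (hSmin u hu).trans (mul_le_mul_of_nonneg_left (min_le_right _ _) hC.le)
  obtain ⟨hi₂, hupper⟩ := intervalIntegrable_and_rpow_mul_integral_le_upperHalf hν₀.le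
    (by linarith) hS (hSi (t / 2) (by linarith))
  rw [← integral_add_adjacent_intervals hi₁ hi₂, mul_add]
  exact add_le_add hlower
    (hupper.trans (mul_le_mul_of_nonneg_left (hmass _ (by linarith)) (by positivity)))
end

section
/- Let ν ∈ (0,1), η > 0 and C, C' > 0, and suppose S : (0,∞) → ℝ is measurable with |S(t)| ≤ C·t^(ν-1) for 0 < t ≤ 1 and |S(t)| ≤ C·t^(-ν-1) for t ≥ 1, and g : [0,∞) → ℝ is continuous with |g(t)| ≤ C' for all t ≥ 0 and |g(t)| ≤ C'·t^(-η) for t ≥ 1. Then with μ = min{ν, η}, there is a constant K such that ∫₀^t |S(t-s)|·|g(s)| ds ≤ K·t^(-μ) for all t ≥ 2. -/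
/-!
Split `[0, t]` at `t / 2` and `t - 1`. Away from the diagonal the kernel bound
`|S (t - s)| ≤ C (t - s) ^ (-ν - 1)` integrates over `[a, b]` to at most `C (t - b) ^ (-ν) / ν`:
with `|g| ≤ C'` this gives `(t / 2) ^ (-ν)` on `[0, t / 2]`, and with `|g| ≤ C' (t / 2) ^ (-η)` it
gives `(t / 2) ^ (-η)` on `[t / 2, t - 1]`. On `[t - 1, t]` the integrable singularity
`(t - s) ^ (ν - 1)` has integral `1 / ν`, again against `|g| ≤ C' (t / 2) ^ (-η)`. Finally
`(t / 2) ^ (-x) ≤ 2 ^ x t ^ (-min ν η)` for `x ∈ {ν, η}`.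
-/

open MeasureTheory Set intervalIntegral

lemma intervalIntegrable_sub_rpow {p t a b : ℝ} (hp : -1 < p) :
    IntervalIntegrable (fun s => (t - s) ^ p) volume a b := by
  simpa using (intervalIntegrable_rpow' hp (a := t - a) (b := t - b)).comp_sub_left t

lemma intervalIntegrable_sub_rpow_of_lt {p t a b : ℝ} (hab : a ≤ b) (hbt : b < t) :
    IntervalIntegrable (fun s => (t - s) ^ p) volume a b := by
  refine ContinuousOn.intervalIntegrable fun s hs => ?_
  rw [uIcc_of_le hab] at hs
  have hts : t - s ≠ 0 := by linarith [hs.2]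
  exact (ContinuousAt.rpow_const (by fun_prop) (Or.inl hts)).continuousWithinAt

lemma integral_sub_rpow_sub_one {ν t a : ℝ} (hν : 0 < ν) :
    ∫ s in a..t, (t - s) ^ (ν - 1) = (t - a) ^ ν / ν := by
  rw [integral_comp_sub_left (fun u => u ^ (ν - 1)), integral_rpow (by left; linarith)]
  simp [Real.zero_rpow hν.ne']

lemma integral_sub_rpow_neg_sub_one_le {ν t a b : ℝ} (hν : 0 < ν) (hab : a ≤ b) (hbt : b < t) :
    ∫ s in a..b, (t - s) ^ (-ν - 1) ≤ (t - b) ^ (-ν) / ν := by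
  have hnot : (0 : ℝ) ∉ uIcc (t - b) (t - a) := by
    rw [uIcc_of_le (by linarith)]; exact fun h => by linarith [h.1]
  rw [integral_comp_sub_left (fun u => u ^ (-ν - 1)),
    integral_rpow (Or.inr ⟨by linarith, hnot⟩), sub_add_cancel, div_neg, ← neg_div, neg_sub]
  gcongr
  linarith [Real.rpow_nonneg (by linarith : (0 : ℝ) ≤ t - a) (-ν)]

lemma integral_abs_mul_abs_le {u v k : ℝ → ℝ} {a b A B : ℝ} (hab : a ≤ b)
    (huv : IntervalIntegrable (fun s => |u s| * |v s|) volume a b)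
    (hk : IntervalIntegrable k volume a b)
    (hu : ∀ s ∈ Ioo a b, |u s| ≤ A * k s) (hv : ∀ s ∈ Ioo a b, |v s| ≤ B) :
    ∫ s in a..b, |u s| * |v s| ≤ A * B * ∫ s in a..b, k s := by
  rw [mul_comm A B, mul_assoc, ← intervalIntegral.integral_const_mul,
    ← intervalIntegral.integral_const_mul]
  refine integral_mono_on_of_le_Ioo hab huv ((hk.const_mul A).const_mul B) fun s hs => ?_
  rw [mul_comm B]
  exact mul_le_mul (hu s hs) (hv s hs) (abs_nonneg _) ((abs_nonneg _).trans (hu s hs))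

lemma integral_abs_mul_abs_le_of_le_sub_rpow_neg {u v : ℝ → ℝ} {ν t a b A B : ℝ} (hν : 0 < ν)
    (hab : a ≤ b) (hbt : b < t) (hAB : 0 ≤ A * B)
    (huv : IntervalIntegrable (fun s => |u s| * |v s|) volume a b)
    (hu : ∀ s ∈ Ioo a b, |u s| ≤ A * (t - s) ^ (-ν - 1)) (hv : ∀ s ∈ Ioo a b, |v s| ≤ B) :
    ∫ s in a..b, |u s| * |v s| ≤ A * B / ν * (t - b) ^ (-ν) := calc
  _ ≤ A * B * ∫ s in a..b, (t - s) ^ (-ν - 1) :=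
    integral_abs_mul_abs_le hab huv (intervalIntegrable_sub_rpow_of_lt hab hbt) hu hv
  _ ≤ A * B * ((t - b) ^ (-ν) / ν) := by gcongr; exact integral_sub_rpow_neg_sub_one_le hν hab hbt
  _ = A * B / ν * (t - b) ^ (-ν) := by ring

lemma integral_abs_mul_abs_le_of_le_sub_rpow {u v : ℝ → ℝ} {ν t a A B : ℝ} (hν : 0 < ν)
    (hat : a ≤ t) (huv : IntervalIntegrable (fun s => |u s| * |v s|) volume a t)
    (hu : ∀ s ∈ Ioo a t, |u s| ≤ A * (t - s) ^ (ν - 1)) (hv : ∀ s ∈ Ioo a t, |v s| ≤ B) :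
    ∫ s in a..t, |u s| * |v s| ≤ A * B / ν * (t - a) ^ ν := calc
  _ ≤ A * B * ∫ s in a..t, (t - s) ^ (ν - 1) :=
    integral_abs_mul_abs_le hat huv (intervalIntegrable_sub_rpow (by linarith)) hu hv
  _ = A * B / ν * (t - a) ^ ν := by rw [integral_sub_rpow_sub_one hν]; ring

lemma abs_le_mul_rpow_neg_of_le {g : ℝ → ℝ} {C' η r s : ℝ} (hη : 0 ≤ η) (hC' : 0 ≤ C')
    (hg : ∀ t : ℝ, 1 ≤ t → |g t| ≤ C' * t ^ (-η)) (hr : 1 ≤ r) (hrs : r ≤ s) :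
    |g s| ≤ C' * r ^ (-η) :=
  (hg s (hr.trans hrs)).trans <| mul_le_mul_of_nonneg_left
    (Real.rpow_le_rpow_of_nonpos (by linarith) hrs (neg_nonpos.mpr hη)) hC'

lemma div_two_rpow_neg_le {t x μ : ℝ} (ht : 1 ≤ t) (hμ : μ ≤ x) :
    (t / 2) ^ (-x) ≤ 2 ^ x * t ^ (-μ) := by
  rw [Real.div_rpow (by linarith) zero_le_two, Real.rpow_neg zero_le_two, div_inv_eq_mul,
    mul_comm]
  gcongr

theorem stmt_19_general (ν η C C' : ℝ) (hν : ν ∈ Set.Ioo (0 : ℝ) 1) (hη : 0 < η)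
    (hC : 0 < C) (hC' : 0 < C')
    (S : ℝ → ℝ)
    (hS₁ : ∀ t : ℝ, 0 < t → t ≤ 1 → |S t| ≤ C * t ^ (ν - 1))
    (hS₂ : ∀ t : ℝ, 1 ≤ t → |S t| ≤ C * t ^ (-ν - 1))
    (g : ℝ → ℝ)
    (hg₁ : ∀ t : ℝ, 0 ≤ t → |g t| ≤ C')
    (hg₂ : ∀ t : ℝ, 1 ≤ t → |g t| ≤ C' * t ^ (-η)) :
    ∃ K : ℝ, ∀ t : ℝ, 2 ≤ t →
      ∫ s in (0 : ℝ)..t, |S (t - s)| * |g s| ≤ K * t ^ (-(min ν η)) := by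
  have hν₀ := hν.1
  refine ⟨C * C' / ν * (2 ^ ν + 2 * 2 ^ η), fun t ht => ?_⟩
  -- A non-integrable integrand has integral `0` by convention.
  by_cases hF : IntervalIntegrable (fun s => |S (t - s)| * |g s|) volume 0 t
  swap
  · rw [integral_undef hF]; positivity
  have hF' {a b : ℝ} (ha : 0 ≤ a) (hab : a ≤ b) (hb : b ≤ t) :
      IntervalIntegrable (fun s => |S (t - s)| * |g s|) volume a b :=
    hF.mono_set (uIcc_subset_uIcc (mem_uIcc_of_le ha (hab.trans hb))
      (mem_uIcc_of_le (ha.trans hab) hb))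
  have hg_half (s : ℝ) (hs : t / 2 ≤ s) : |g s| ≤ C' * (t / 2) ^ (-η) :=
    abs_le_mul_rpow_neg_of_le hη.le hC'.le hg₂ (by linarith) hs
  have h₁ := integral_abs_mul_abs_le_of_le_sub_rpow_neg hν₀ (by linarith) (by linarith)
    (by positivity) (hF' (b := t / 2) le_rfl (by linarith) (by linarith))
    (fun s hs => hS₂ _ (by linarith [hs.2])) (fun s hs => hg₁ s hs.1.le)
  have h₂ := integral_abs_mul_abs_le_of_le_sub_rpow_neg hν₀ (by linarith) (by linarith)
    (by positivity) (hF' (a := t / 2) (b := t - 1) (by linarith) (by linarith) (by linarith))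
    (fun s hs => hS₂ _ (by linarith [hs.2])) (fun s hs => hg_half s hs.1.le)
  have h₃ := integral_abs_mul_abs_le_of_le_sub_rpow hν₀ (by linarith)
    (hF' (a := t - 1) (by linarith) (by linarith) le_rfl)
    (fun s hs => hS₁ _ (by linarith [hs.2]) (by linarith [hs.1]))
    (fun s hs => hg_half s (by linarith [hs.1]))
  rw [sub_half] at h₁
  rw [sub_sub_cancel, Real.one_rpow, mul_one] at h₂ h₃
  rw [← integral_add_adjacent_intervals (hF' (b := t - 1) le_rfl (by linarith) (by linarith))
      (hF' (by linarith) (by linarith) le_rfl),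
    ← integral_add_adjacent_intervals (hF' (b := t / 2) le_rfl (by linarith) (by linarith))
      (hF' (by linarith) (by linarith) (by linarith))]
  have k₁ := div_two_rpow_neg_le (by linarith : (1 : ℝ) ≤ t) (min_le_left ν η)
  have k₂ := div_two_rpow_neg_le (by linarith : (1 : ℝ) ≤ t) (min_le_right ν η)
  calc _ ≤ C * C' / ν * ((t / 2) ^ (-ν) + 2 * (t / 2) ^ (-η)) := by
        have : C * (C' * (t / 2) ^ (-η)) / ν = C * C' / ν * (t / 2) ^ (-η) := by ring
        linarith
    _ ≤ C * C' / ν * (2 ^ ν * t ^ (-min ν η) + 2 * (2 ^ η * t ^ (-min ν η))) := by gcongr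
    _ = _ := by ring

theorem stmt_19 (ν η C C' : ℝ) (hν : ν ∈ Set.Ioo (0 : ℝ) 1) (hη : 0 < η)
    (hC : 0 < C) (hC' : 0 < C')
    (S : ℝ → ℝ) (hS : Measurable S)
    (hS₁ : ∀ t : ℝ, 0 < t → t ≤ 1 → |S t| ≤ C * t ^ (ν - 1))
    (hS₂ : ∀ t : ℝ, 1 ≤ t → |S t| ≤ C * t ^ (-ν - 1))
    (g : ℝ → ℝ) (hg : Continuous g)
    (hg₁ : ∀ t : ℝ, 0 ≤ t → |g t| ≤ C')
    (hg₂ : ∀ t : ℝ, 1 ≤ t → |g t| ≤ C' * t ^ (-η)) :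
    ∃ K : ℝ, ∀ t : ℝ, 2 ≤ t →
      ∫ s in (0 : ℝ)..t, |S (t - s)| * |g s| ≤ K * t ^ (-(min ν η)) :=
  stmt_19_general ν η C C' hν hη hC hC' S hS₁ hS₂ g hg₁ hg₂
end
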